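/- Let q ≥ 2 be real, let t ∈ ℝ^m have nonnegative entries, set r_e = t_e^{q−2} for each e, and define h_q(r,Δ) = 2∑_{e=1}^m r_e Δ_e² + ‖Δ‖_q^q. Then for every Δ ∈ ℝ^m, (1/q)·γ_q(t,Δ) ≤ h_q(r,Δ) ≤ 3·γ_q(t,Δ). -/

import Mathlib

/-!
Both bounds hold coordinatewise. With `A = t^{q-2} x²` and `B = |x|^q`, the identity
`|x|^q = |x|^{q-2} x²` and monotonicity of `s ↦ s^{q-2}` give `B ≤ A` when `|x| ≤ t`, and
`t^q ≤ A ≤ B` when `t < |x|`. In the first regime `γ_q = (q/2) A`, in the second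
`B ≤ γ_q ≤ B + (q/2) A`, and both inequalities follow by linear arithmetic.
-/

/-- The per-coordinate smoothed power function
`γ_q(t,x) = (q/2)t^{q−2}x²` if `|x| ≤ t`, and `|x|^q + (q/2 − 1)t^q` otherwise. -/
noncomputable def gam (q t x : ℝ) : ℝ :=
  if |x| ≤ t then q / 2 * t ^ (q - 2) * x ^ 2 else |x| ^ q + (q / 2 - 1) * t ^ q

namespace Real

theorem rpow_eq_rpow_sub_two_mul_sq {a q : ℝ} (ha : 0 ≤ a) (hq : q ≠ 0) :
    a ^ q = a ^ (q - 2) * a ^ 2 := by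
  rw [← rpow_two, ← rpow_add' ha (by simpa using hq), sub_add_cancel]

section

variable {q t x : ℝ}

theorem abs_rpow_le_rpow_sub_two_mul_sq (hq : 2 ≤ q) (h : |x| ≤ t) :
    |x| ^ q ≤ t ^ (q - 2) * x ^ 2 := by
  rw [rpow_eq_rpow_sub_two_mul_sq (abs_nonneg x) (by positivity), sq_abs]
  gcongr

theorem rpow_sub_two_mul_sq_le_abs_rpow (hq : 2 ≤ q) (ht : 0 ≤ t) (h : t ≤ |x|) :
    t ^ (q - 2) * x ^ 2 ≤ |x| ^ q := by
  rw [rpow_eq_rpow_sub_two_mul_sq (abs_nonneg x) (by positivity), sq_abs]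
  gcongr

theorem rpow_le_rpow_sub_two_mul_sq (hq : 2 ≤ q) (ht : 0 ≤ t) (h : t ≤ |x|) :
    t ^ q ≤ t ^ (q - 2) * x ^ 2 := by
  rw [rpow_eq_rpow_sub_two_mul_sq ht (by positivity), ← sq_abs x]
  gcongr

end

end Real

section

variable {q t : ℝ}

theorem one_div_mul_gam_le (hq : 2 ≤ q) (ht : 0 ≤ t) (x : ℝ) :
    1 / q * gam q t x ≤ 2 * (t ^ (q - 2) * x ^ 2) + |x| ^ q := by
  have hq0 : 0 < q := by linarith
  have hA : 0 ≤ t ^ (q - 2) * x ^ 2 := by positivity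
  have hB : 0 ≤ |x| ^ q := by positivity
  rw [one_div, inv_mul_le_iff₀ hq0, gam]
  split_ifs with h
  · nlinarith
  · have htq := Real.rpow_le_rpow_sub_two_mul_sq hq ht (not_le.mp h).le
    nlinarith

theorem le_three_mul_gam (hq : 2 ≤ q) (ht : 0 ≤ t) (x : ℝ) :
    2 * (t ^ (q - 2) * x ^ 2) + |x| ^ q ≤ 3 * gam q t x := by
  have hA : 0 ≤ t ^ (q - 2) * x ^ 2 := by positivity
  rw [gam]
  split_ifs with h
  · have hBA := Real.abs_rpow_le_rpow_sub_two_mul_sq hq h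
    nlinarith
  · have hAB := Real.rpow_sub_two_mul_sq_le_abs_rpow hq ht (not_le.mp h).le
    have htq : 0 ≤ t ^ q := by positivity
    nlinarith

end

/-- Lemma C.1, res-gamma. -/
theorem stmt_12 {m : ℕ} {q : ℝ} (hq : 2 ≤ q) (t : Fin m → ℝ) (ht : ∀ e, 0 ≤ t e)
    (r : Fin m → ℝ) (hr : ∀ e, r e = t e ^ (q - 2)) (Δ : Fin m → ℝ) :
    1 / q * (∑ e, gam q (t e) (Δ e))
        ≤ 2 * (∑ e, r e * Δ e ^ 2) + (∑ e, |Δ e| ^ q) ∧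
      2 * (∑ e, r e * Δ e ^ 2) + (∑ e, |Δ e| ^ q)
        ≤ 3 * ∑ e, gam q (t e) (Δ e) := by
  have hsum : 2 * (∑ e, r e * Δ e ^ 2) + (∑ e, |Δ e| ^ q)
      = ∑ e, (2 * (t e ^ (q - 2) * Δ e ^ 2) + |Δ e| ^ q) := by
    simp only [hr, Finset.sum_add_distrib, Finset.mul_sum]
  rw [hsum, Finset.mul_sum, Finset.mul_sum]
  exact ⟨Finset.sum_le_sum fun e _ => one_div_mul_gam_le hq (ht e) (Δ e),
    Finset.sum_le_sum fun e _ => le_three_mul_gam hq (ht e) (Δ e)⟩
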